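/- For every P in ℂ[x_1,x_2,…][λ_1,…,λ_r,μ_1,…,μ_r], one has Φ^−_λ(z)(Ψ_μ(w)·P) − Ψ_μ(w)·Φ^−_λ(z)(P) = F(z,w;λ,μ)·P, where F(z,w;λ,μ) := (1/(2κ))·∑_{1≤p,q≤r} binom(p+q, p)·((−1)^{p+1}/(p+q))·λ_p·μ_q·∑_{m≥0} binom(p+q+m−1, m)·w^m·z^{−(p+q+m)} is the expansion of f_κ(z−w;λ,μ) in the domain |z| > |w|. That is, the commutator of the annihilation part of the coherent-state field at z with the creation part at w is scalar multiplication by f_κ(z−w;λ,μ) expanded in positive powers of w/z. -/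

import Mathlib

/-!
STATEMENT 10.
Fix r ≥ 1 and κ ≠ 0.  Work in R := ℂ[x_1,x_2,…][λ_1,…,λ_r,μ_1,…,μ_r]
(= `MvPolynomial (ℕ ⊕ (Fin r ⊕ Fin r)) ℂ`, with `Sum.inl i` = x_{i+1},
`Sum.inr (Sum.inl p)` = λ_{p+1}, `Sum.inr (Sum.inr q)` = μ_{q+1}).
For m ≥ 1, a_m := 2κm·∂/∂x_m.  The annihilation part of the coherent-state
field at z is given coefficientwise by `PhiMinus` (coefficient of `z^e`):
  Φ^−_λ(z)P := (1/(2κ))·∑_{n=1}^r (λ_n/n)·∑_{m≥1} (−1)^{n−1}·C(m+n−1,n−1)·z^{−m−n}·(a_m P).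
The creation part at w is the formal power series in w (coefficient of
`w^t` given by `Psi`):
  Ψ_μ(w) := (1/(2κ))·∑_{q=1}^r (μ_q/q)·∑_{m≥q} C(m−1,q−1)·x_m·w^{m−q},
acting by multiplication.  Then for every P and every w-exponent t ≥ 0 and
z-exponent e ∈ ℤ,
  Φ^−_λ(z)(Ψ_μ(w)·P) − Ψ_μ(w)·Φ^−_λ(z)(P) = F(z,w;λ,μ)·P,
where F(z,w;λ,μ) := (1/(2κ))·∑_{1≤p,q≤r} C(p+q,p)·((−1)^{p+1}/(p+q))·λ_p·μ_q·
    ∑_{m≥0} C(p+q+m−1,m)·w^m·z^{−(p+q+m)}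
is the expansion of f_κ(z−w;λ,μ) in the domain |z|>|w| (coefficient of
`w^t z^e` given by `Fc`).
-/

noncomputable section

abbrev R' (r : ℕ) : Type := MvPolynomial (ℕ ⊕ (Fin r ⊕ Fin r)) ℂ

/-- `a_m := 2κ m ∂/∂x_m` (for m ≥ 1; gives 0 at m = 0). -/
def aR (r : ℕ) (κ : ℂ) (m : ℕ) (P : R' r) : R' r :=
  (2 * κ * (m : ℂ)) • MvPolynomial.pderiv (Sum.inl (m - 1)) P

/-- The coefficient of `z^e` in `Φ^−_λ(z)P`. -/
def PhiMinus (r : ℕ) (κ : ℂ) (P : R' r) (e : ℤ) : R' r :=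
  ∑ n : Fin r,
    if e ≤ -(((n : ℕ) : ℤ) + 2) then
      ((1 / (2 * κ)) * (1 / (((n : ℕ) : ℂ) + 1)) * (-1 : ℂ) ^ ((n : ℕ)) *
          (Nat.choose (((-e).toNat - ((n : ℕ) + 1)) + (n : ℕ)) ((n : ℕ)) : ℂ)) •
        (MvPolynomial.X (Sum.inr (Sum.inl n)) *
          aR r κ ((-e).toNat - ((n : ℕ) + 1)) P)
    else 0

/-- The coefficient of `w^t` in `Ψ_μ(w)`: for `q : Fin r` (math index
`(q:ℕ)+1`), the term with `w^{m−(q+1)} = w^t` has `m = t+(q:ℕ)+1`, so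
`x_m = X (Sum.inl (t+(q:ℕ)))` and `C(m−1, q) = C(t+(q:ℕ), (q:ℕ))`. -/
def Psi (r : ℕ) (κ : ℂ) (t : ℕ) : R' r :=
  ∑ q : Fin r,
    MvPolynomial.C
        ((1 / (2 * κ * (((q : ℕ) : ℂ) + 1))) * (Nat.choose (t + (q : ℕ)) (q : ℕ) : ℂ))
      * MvPolynomial.X (Sum.inr (Sum.inr q)) * MvPolynomial.X (Sum.inl (t + (q : ℕ)))

/-- The coefficient of `w^t z^e` in `F(z,w;λ,μ)`, the expansion of
`f_κ(z−w;λ,μ)` for |z|>|w|. -/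
def Fc (r : ℕ) (κ : ℂ) (t : ℕ) (e : ℤ) : R' r :=
  ∑ p : Fin r, ∑ q : Fin r,
    if ((p : ℕ) + (q : ℕ) + 2 + t : ℤ) = -e then
      MvPolynomial.C
        ((1 / (2 * κ)) * (Nat.choose ((p : ℕ) + (q : ℕ) + 2) ((p : ℕ) + 1) : ℂ) *
          (-1 : ℂ) ^ ((p : ℕ) + 2) / (((p : ℕ) : ℂ) + ((q : ℕ) : ℂ) + 2) *
          (Nat.choose ((p : ℕ) + (q : ℕ) + 1 + t) t : ℂ))
        * MvPolynomial.X (Sum.inr (Sum.inl p)) * MvPolynomial.X (Sum.inr (Sum.inr q))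
    else 0

/-!
Each coefficient of `Φ^−_λ(z)` is a combination, with polynomial coefficients, of the
derivations `∂/∂x_m`, hence is itself a derivation. The commutator with multiplication by
`Ψ_μ(w)` is therefore multiplication by `Φ^−_λ(z) Ψ_μ(w)`, and since `Ψ_μ(w)` is linear in the
`x_m`, this is a scalar series in `λ, μ`; comparing coefficients with `F` reduces to a binomial
identity.
-/

open MvPolynomial

/-- Both sides equal `(n + q + 2) (n + q + t + 1)! / (n! q! t!)`. -/
lemma Nat.add_two_mul_choose_mul_choose_eq (n q t : ℕ) :
    (n + q + 2) * (q + t + 1) * (n + q + t + 1).choose n * (q + t).choose q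
      = (n + 1) * (q + 1) * (n + q + 2).choose (n + 1) * (n + q + t + 1).choose t := by
  have h₁ : (q + t + 1) * (q + t).choose q = (q + 1) * (q + t + 1).choose t := by
    rw [Nat.add_one_mul_choose_eq, show q + t + 1 = (q + 1) + t by ring, Nat.choose_symm_add]
    ring
  have h₂ : (n + q + 2) * (n + q + 1).choose n = (n + 1) * (n + q + 2).choose (n + 1) := by
    rw [Nat.add_one_mul_choose_eq]; ring
  have h₃ : (n + q + t + 1).choose n * (q + t + 1).choose t
      = (n + q + t + 1).choose t * (n + q + 1).choose n := by
    have hn := Nat.choose_mul (n := n + q + t + 1) (k := n + t) (s := n) (by omega)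
    have ht := Nat.choose_mul (n := n + q + t + 1) (k := n + t) (s := t) (by omega)
    rw [Nat.choose_symm_add] at hn
    simp only [show n + q + t + 1 - n = q + t + 1 by omega, show n + t - n = t by omega,
      show n + q + t + 1 - t = n + q + 1 by omega, show n + t - t = n by omega] at hn ht
    rw [← hn, ht]
  calc _ = (n + q + 2) * (n + q + t + 1).choose n * ((q + t + 1) * (q + t).choose q) := by ring
    _ = (n + q + 2) * (q + 1) * ((n + q + t + 1).choose n * (q + t + 1).choose t) := by
          rw [h₁]; ring
    _ = (q + 1) * (n + q + t + 1).choose t * ((n + q + 2) * (n + q + 1).choose n) := by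
          rw [h₃]; ring
    _ = _ := by rw [h₂]; ring

variable {r : ℕ} {κ : ℂ}

lemma PhiMinus_mul (Q P : R' r) (e : ℤ) :
    PhiMinus r κ (Q * P) e = PhiMinus r κ Q e * P + Q * PhiMinus r κ P e := by
  simp only [PhiMinus, aR, Derivation.leibniz, smul_eq_mul, Finset.sum_mul, Finset.mul_sum,
    ← Finset.sum_add_distrib]
  refine Finset.sum_congr rfl fun n _ => ?_
  split_ifs
  · simp only [smul_eq_C_mul]; ring
  · simp

lemma pderiv_inl_Psi (t k : ℕ) :
    pderiv (Sum.inl k) (Psi r κ t) = ∑ q : Fin r, if t + q = k then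
      C (1 / (2 * κ * ((q : ℂ) + 1)) * (t + q).choose q) * X (Sum.inr (Sum.inr q)) else 0 := by
  simp only [Psi, map_sum, Derivation.leibniz, pderiv_C, pderiv_X, Pi.single_apply,
    Sum.inl.injEq, reduceCtorEq, if_false, smul_eq_mul]
  refine Finset.sum_congr rfl fun q _ => ?_
  split_ifs <;> simp

lemma PhiMinus_Psi_coeff_eq_Fc_coeff (hκ : κ ≠ 0) (n q t : ℕ) :
    1 / (2 * κ) * (1 / ((n : ℂ) + 1)) * (-1) ^ n * ((t + q + 1 + n).choose n : ℂ) *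
        (2 * κ * ((t + q + 1 : ℕ) : ℂ)) *
        (1 / (2 * κ * ((q : ℂ) + 1)) * ((t + q).choose q : ℂ))
      = 1 / (2 * κ) * ((n + q + 2).choose (n + 1) : ℂ) * (-1) ^ (n + 2) /
          ((n : ℂ) + (q : ℂ) + 2) * ((n + q + 1 + t).choose t : ℂ) := by
  have key := congrArg (Nat.cast (R := ℂ)) (Nat.add_two_mul_choose_mul_choose_eq n q t)
  rw [show t + q + 1 + n = n + q + t + 1 by ring, show n + q + 1 + t = n + q + t + 1 by ring,
    add_comm t q]
  have hq : (q : ℂ) + 1 ≠ 0 := by norm_cast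
  have hn : (n : ℂ) + 1 ≠ 0 := by norm_cast
  have hnq : (n : ℂ) + q + 2 ≠ 0 := by norm_cast
  push_cast at key ⊢
  rw [pow_add, neg_one_sq, mul_one]
  field_simp
  linear_combination key

lemma PhiMinus_Psi (hκ : κ ≠ 0) (t : ℕ) (e : ℤ) :
    PhiMinus r κ (Psi r κ t) e = Fc r κ t e := by
  refine Finset.sum_congr rfl fun n _ => ?_
  split_ifs with hn
  · obtain ⟨m, rfl⟩ : ∃ m : ℕ, e = -((n : ℤ) + 2 + m) :=
      ⟨(-e - (n + 2)).toNat, by omega⟩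
    have hm : (- -((n : ℤ) + 2 + m)).toNat - (n + 1) = m + 1 := by omega
    rw [hm, aR, Nat.add_sub_cancel, pderiv_inl_Psi, Finset.smul_sum, Finset.mul_sum,
      Finset.smul_sum]
    refine Finset.sum_congr rfl fun q _ => ?_
    by_cases hq : t + q = m
    · subst hq
      rw [if_pos rfl, if_pos (by push_cast; ring),
        ← PhiMinus_Psi_coeff_eq_Fc_coeff hκ n q t]
      simp only [smul_eq_C_mul, map_mul, map_natCast]
      push_cast
      ring
    · rw [if_neg hq, if_neg (by omega)]
      simp
  · exact (Finset.sum_eq_zero fun q _ => if_neg (by omega)).symm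

theorem statement10_general (r : ℕ) (κ : ℂ) (hκ : κ ≠ 0) (P : R' r)
    (t : ℕ) (e : ℤ) :
    PhiMinus r κ (Psi r κ t * P) e - Psi r κ t * PhiMinus r κ P e
      = Fc r κ t e * P := by
  rw [PhiMinus_mul, add_sub_cancel_right, PhiMinus_Psi hκ]

theorem statement10 (r : ℕ) (hr : 1 ≤ r) (κ : ℂ) (hκ : κ ≠ 0) (P : R' r)
    (t : ℕ) (e : ℤ) :
    PhiMinus r κ (Psi r κ t * P) e - Psi r κ t * PhiMinus r κ P e
      = Fc r κ t e * P :=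
  statement10_general r κ hκ P t e

end
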